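/- arXiv:1204.2532 — 8 statements merged into one kernel-verified Lean document; each statement's English description precedes it below -/
import Mathlib

section
/- Let r ≥ 1 and let i_1, …, i_r be admissible ramification indices whose weights sum to r − 2 (in ℚ). Then the multiset {i_1, …, i_r} is one of the following: {−1}; {n, −n} for some integer n ≥ 2; {∞, ∞}; {2, 2, ∞}; {2, 3, 6}; {2, 4, 4}; {3, 3, 3}; {2, 2, 2, 2}. -/
/-- An admissible ramification index: an element of `(ℤ \ {0, 1}) ∪ {∞}`,
encoded as `Option ℤ` where `none` stands for `∞`. -/
def AdmissibleIndex (i : Option ℤ) : Prop :=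
  i = none ∨ ∃ n : ℤ, n ≠ 0 ∧ n ≠ 1 ∧ i = some n

/-- The weight of a ramification index: `1/n` for a finite index `n`, `0` for `∞`. -/
def indexWeight : Option ℤ → ℚ
  | none => 0
  | some n => 1 / (n : ℚ)

lemma indexWeight_none : indexWeight none = 0 := rfl

lemma indexWeight_some (n : ℤ) : indexWeight (some n) = 1 / (n : ℚ) := rfl

lemma weight_le_half {x : Option ℤ} (h : AdmissibleIndex x) : indexWeight x ≤ 1/2 := by
  rcases h with rfl | ⟨n, h0, h1, rfl⟩
  · norm_num [indexWeight]
  · rw [indexWeight_some]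
    rcases (by omega : n ≤ -1 ∨ 2 ≤ n) with h | h
    · have hn : (n:ℚ) < 0 := by exact_mod_cast (by omega : n < 0)
      have := one_div_neg.mpr hn
      linarith
    · exact one_div_le_one_div_of_le (by norm_num) (by exact_mod_cast h)

lemma weight_nonneg_ge_two {n : ℤ} (h0 : n ≠ 0) (h1 : n ≠ 1) (h : 0 ≤ 1/(n:ℚ)) : 2 ≤ n := by
  rcases (by omega : n ≤ -1 ∨ 2 ≤ n) with hn | hn
  · have hn' : (n:ℚ) < 0 := by exact_mod_cast (by omega : n < 0)
    have := one_div_neg.mpr hn'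
    linarith
  · exact hn

lemma eq_of_half {n : ℤ} (h0 : n ≠ 0) (h : 1/(n:ℚ) = 1/2) : n = 2 := by
  have hn : (n:ℚ) ≠ 0 := by exact_mod_cast h0
  have : (n:ℚ) = 2 := by field_simp at h; linarith
  exact_mod_cast this

lemma small_of_ge {c : ℤ} (hc : 2 ≤ c) (h : (5:ℚ)/14 ≤ 1/(c:ℚ)) : c = 2 := by
  have hcq : (0:ℚ) < c := by exact_mod_cast (by omega : (0:ℤ) < c)
  have h2 : (5:ℚ) * c ≤ 1 * 14 := (div_le_div_iff₀ (by norm_num) hcq).mp h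
  have : (5:ℤ) * c ≤ 1 * 14 := by exact_mod_cast h2
  omega

lemma key3 {a b c : ℤ} (ha : 2 ≤ a) (hb : 2 ≤ b) (hc : 2 ≤ c)
    (h : 1/(a:ℚ) + 1/(b:ℚ) + 1/(c:ℚ) = 1) : a ≤ 6 := by
  by_contra h7
  push_neg at h7
  have ha7 : (7:ℚ) ≤ a := by exact_mod_cast h7
  have hia : 1/(a:ℚ) ≤ 1/7 := one_div_le_one_div_of_le (by norm_num) ha7
  have hib : 1/(b:ℚ) ≤ 1/2 := one_div_le_one_div_of_le (by norm_num) (by exact_mod_cast hb)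
  have hc2 : c = 2 := small_of_ge hc (by linarith)
  have hwc : 1/(c:ℚ) = 1/2 := by rw [hc2]; norm_num
  have hb2 : b = 2 := small_of_ge hb (by linarith)
  have hwb : 1/(b:ℚ) = 1/2 := by rw [hb2]; norm_num
  have hapos : (0:ℚ) < 1/(a:ℚ) := by positivity
  linarith

/-- If `i_1, …, i_r` (with `r ≥ 1`) are admissible ramification indices whose weights
sum to `r − 2`, then the multiset `{i_1, …, i_r}` is one of the listed ones. -/
theorem uniformizable_affine_structure_types (r : ℕ) (hr : 1 ≤ r)
    (i : Fin r → Option ℤ) (hadm : ∀ j, AdmissibleIndex (i j))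
    (hsum : ∑ j, indexWeight (i j) = (r : ℚ) - 2) :
    (↑(List.ofFn i) : Multiset (Option ℤ)) = {some (-1)} ∨
    (∃ n : ℤ, 2 ≤ n ∧ (↑(List.ofFn i) : Multiset (Option ℤ)) = {some n, some (-n)}) ∨
    (↑(List.ofFn i) : Multiset (Option ℤ)) = {none, none} ∨
    (↑(List.ofFn i) : Multiset (Option ℤ)) = {some 2, some 2, none} ∨
    (↑(List.ofFn i) : Multiset (Option ℤ)) = {some 2, some 3, some 6} ∨
    (↑(List.ofFn i) : Multiset (Option ℤ)) = {some 2, some 4, some 4} ∨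
    (↑(List.ofFn i) : Multiset (Option ℤ)) = {some 3, some 3, some 3} ∨
    (↑(List.ofFn i) : Multiset (Option ℤ)) = {some 2, some 2, some 2, some 2} := by
  have hle : ∀ j, indexWeight (i j) ≤ 1/2 := fun j => weight_le_half (hadm j)
  have hr4 : r ≤ 4 := by
    by_contra hbig
    push_neg at hbig
    have hs : ∑ j, indexWeight (i j) ≤ ∑ _j : Fin r, (1:ℚ)/2 :=
      Finset.sum_le_sum (fun j _ => hle j)
    rw [hsum, Finset.sum_const, Finset.card_univ, Fintype.card_fin] at hs
    have : (r:ℚ) - 2 ≤ r * (1/2) := by simpa [nsmul_eq_mul] using hs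
    have h5 : (5:ℚ) ≤ r := by exact_mod_cast hbig
    linarith
  interval_cases r
  · -- r = 1
    rw [Fin.sum_univ_one] at hsum
    norm_num at hsum
    rcases hadm 0 with h0 | ⟨n, hn0, hn1, h0⟩
    · rw [h0, indexWeight_none] at hsum; norm_num at hsum
    · rw [h0, indexWeight_some] at hsum
      have hn : (n:ℚ) ≠ 0 := by exact_mod_cast hn0
      have : (n:ℚ) = -1 := by field_simp at hsum; linarith
      have hne : n = -1 := by exact_mod_cast this
      left
      simp [List.ofFn_succ, h0, hne]
  · -- r = 2
    rw [Fin.sum_univ_two] at hsum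
    norm_num at hsum
    have hof : (↑(List.ofFn i) : Multiset (Option ℤ)) = ↑[i 0, i 1] := by
      simp [List.ofFn_succ]
    rcases hadm 0 with h0 | ⟨n, hn0, hn1, h0⟩ <;> rcases hadm 1 with h1 | ⟨m, hm0, hm1, h1⟩
    · refine Or.inr (Or.inr (Or.inl ?_))
      rw [hof, h0, h1]; rfl
    · rw [h0, h1, indexWeight_none, indexWeight_some, zero_add] at hsum
      have hm : (m:ℚ) ≠ 0 := by exact_mod_cast hm0
      exact absurd hsum (one_div_ne_zero hm)
    · rw [h0, h1, indexWeight_none, indexWeight_some, add_zero] at hsum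
      have hn : (n:ℚ) ≠ 0 := by exact_mod_cast hn0
      exact absurd hsum (one_div_ne_zero hn)
    · rw [h0, h1, indexWeight_some, indexWeight_some] at hsum
      have hn : (n:ℚ) ≠ 0 := by exact_mod_cast hn0
      have hm : (m:ℚ) ≠ 0 := by exact_mod_cast hm0
      have hmn : m = -n := by
        have : (m:ℚ) = -n := by field_simp at hsum; linarith
        exact_mod_cast this
      subst hmn
      rcases (by omega : 2 ≤ n ∨ n ≤ -2) with hn2 | hn2
      · refine Or.inr (Or.inl ⟨n, hn2, ?_⟩)
        rw [hof, h0, h1]; rfl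
      · refine Or.inr (Or.inl ⟨-n, by omega, ?_⟩)
        rw [hof, h0, h1, neg_neg]
        rw [show ({some (-n), some n} : Multiset (Option ℤ)) = ↑[some (-n), some n] from rfl,
          Multiset.coe_eq_coe]
        exact List.Perm.swap _ _ _
  · -- r = 3
    rw [Fin.sum_univ_three] at hsum
    norm_num at hsum
    have hof : (↑(List.ofFn i) : Multiset (Option ℤ)) = ↑[i 0, i 1, i 2] := by
      simp [List.ofFn_succ]
    have hl0 := hle 0; have hl1 := hle 1; have hl2 := hle 2
    have hg0 : 0 ≤ indexWeight (i 0) := by linarith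
    have hg1 : 0 ≤ indexWeight (i 1) := by linarith
    have hg2 : 0 ≤ indexWeight (i 2) := by linarith
    rcases hadm 0 with h0 | ⟨n, hn0, hn1, h0⟩ <;>
      rcases hadm 1 with h1 | ⟨m, hm0, hm1, h1⟩ <;>
      rcases hadm 2 with h2 | ⟨k, hk0, hk1, h2⟩ <;>
      rw [h0, h1, h2] at hsum <;>
      simp only [indexWeight_none, indexWeight_some] at hsum
    · -- none none none
      norm_num at hsum
    · -- none none some k
      exfalso
      rw [h2, indexWeight_some] at hl2
      linarith
    · -- none some m none
      exfalso
      rw [h1, indexWeight_some] at hl1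
      linarith
    · -- none some m some k
      rw [h1, indexWeight_some] at hl1
      rw [h2, indexWeight_some] at hl2
      have hm2 : m = 2 := eq_of_half hm0 (by linarith)
      have hk2 : k = 2 := eq_of_half hk0 (by linarith)
      refine Or.inr (Or.inr ?_)
      rw [hof, h0, h1, h2, hm2, hk2]
      decide
    · -- some n none none
      exfalso
      rw [h0, indexWeight_some] at hl0
      linarith
    · -- some n none some k
      rw [h0, indexWeight_some] at hl0
      rw [h2, indexWeight_some] at hl2
      have hn2 : n = 2 := eq_of_half hn0 (by linarith)
      have hk2 : k = 2 := eq_of_half hk0 (by linarith)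
      refine Or.inr (Or.inr ?_)
      rw [hof, h0, h1, h2, hn2, hk2]
      decide
    · -- some n some m none
      rw [h0, indexWeight_some] at hl0
      rw [h1, indexWeight_some] at hl1
      have hn2 : n = 2 := eq_of_half hn0 (by linarith)
      have hm2 : m = 2 := eq_of_half hm0 (by linarith)
      refine Or.inr (Or.inr ?_)
      rw [hof, h0, h1, h2, hn2, hm2]
      decide
    · -- some n some m some k
      rw [h0, indexWeight_some] at hg0
      rw [h1, indexWeight_some] at hg1
      rw [h2, indexWeight_some] at hg2
      have hn2 : 2 ≤ n := weight_nonneg_ge_two hn0 hn1 hg0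
      have hm2 : 2 ≤ m := weight_nonneg_ge_two hm0 hm1 hg1
      have hk2 : 2 ≤ k := weight_nonneg_ge_two hk0 hk1 hg2
      have hn6 : n ≤ 6 := key3 hn2 hm2 hk2 hsum
      have hm6 : m ≤ 6 := key3 hm2 hn2 hk2 (by linarith)
      have hk6 : k ≤ 6 := key3 hk2 hn2 hm2 (by linarith)
      rw [hof, h0, h1, h2]
      clear hof h0 h1 h2 hg0 hg1 hg2 hl0 hl1 hl2 hadm hle
      interval_cases n <;> interval_cases m <;> interval_cases k <;>
        first
          | (refine Or.inr (Or.inr ?_); decide)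
          | (exfalso; norm_num at hsum)
  · -- r = 4
    rw [Fin.sum_univ_four] at hsum
    norm_num at hsum
    have hl0 := hle 0; have hl1 := hle 1; have hl2 := hle 2; have hl3 := hle 3
    have he0 : indexWeight (i 0) = 1/2 := by linarith
    have he1 : indexWeight (i 1) = 1/2 := by linarith
    have he2 : indexWeight (i 2) = 1/2 := by linarith
    have he3 : indexWeight (i 3) = 1/2 := by linarith
    have hv : ∀ j : Fin 4, indexWeight (i j) = 1/2 → i j = some 2 := by
      intro j hj
      rcases hadm j with h | ⟨n, hn0, hn1, h⟩
      · rw [h, indexWeight_none] at hj; norm_num at hj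
      · rw [h, indexWeight_some] at hj
        rw [h, eq_of_half hn0 hj]
    refine Or.inr (Or.inr (Or.inr (Or.inr (Or.inr (Or.inr (Or.inr ?_))))))
    have hof : (↑(List.ofFn i) : Multiset (Option ℤ)) = ↑[i 0, i 1, i 2, i 3] := by
      simp [List.ofFn_succ]
    rw [hof, hv 0 he0, hv 1 he1, hv 2 he2, hv 3 he3]
    rfl
end

section
/- Let l ≥ 3, let k : ZMod l → ℤ satisfy k_i ≥ 2 for every i, and let μ : ZMod l → ℝ satisfy μ_i > 0 for every i. If μ_{i−1} − k_i·μ_i + μ_{i+1} = 0 for every i ∈ ZMod l, then k_i = 2 for every i. -/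
/-- Camacho–Sad relations around a cycle: if `l ≥ 3`, `k i ≥ 2` for every `i`,
`μ i > 0` for every `i`, and `μ_{i−1} − k_i·μ_i + μ_{i+1} = 0` for every
`i ∈ ZMod l`, then `k i = 2` for every `i`. -/
theorem cycle_camacho_sad_forces_two (l : ℕ) (hl : 3 ≤ l)
    (k : ZMod l → ℤ) (hk : ∀ i, 2 ≤ k i)
    (μ : ZMod l → ℝ) (hμ : ∀ i, 0 < μ i)
    (hrel : ∀ i : ZMod l, μ (i - 1) - (k i : ℝ) * μ i + μ (i + 1) = 0) :
    ∀ i, k i = 2 := by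
  haveI : NeZero l := ⟨by omega⟩
  have h1 : ∑ i : ZMod l, μ (i - 1) = ∑ i : ZMod l, μ i :=
    Fintype.sum_equiv (Equiv.subRight (1 : ZMod l)) _ _ (fun i => rfl)
  have h2 : ∑ i : ZMod l, μ (i + 1) = ∑ i : ZMod l, μ i :=
    Fintype.sum_equiv (Equiv.addRight (1 : ZMod l)) _ _ (fun i => rfl)
  have hsum : ∑ i : ZMod l, ((k i : ℝ) - 2) * μ i = 0 := by
    have : ∑ i : ZMod l, (μ (i - 1) - (k i : ℝ) * μ i + μ (i + 1)) = 0 :=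
      Finset.sum_eq_zero (fun i _ => hrel i)
    simp only [Finset.sum_add_distrib, Finset.sum_sub_distrib] at this
    rw [h1, h2] at this
    have expand : ∀ i : ZMod l, ((k i : ℝ) - 2) * μ i = (k i : ℝ) * μ i - 2 * μ i := by
      intro i; ring
    rw [Finset.sum_congr rfl (fun i _ => expand i), Finset.sum_sub_distrib]
    have : ∑ i : ZMod l, (k i : ℝ) * μ i = 2 * ∑ i : ZMod l, μ i := by linarith
    rw [this, Finset.mul_sum]
    ring
  have hnn : ∀ i ∈ Finset.univ, (0:ℝ) ≤ ((k i : ℝ) - 2) * μ i := by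
    intro i _
    apply mul_nonneg _ (hμ i).le
    have := hk i
    have : (2:ℝ) ≤ (k i : ℝ) := by exact_mod_cast this
    linarith
  have hz := (Finset.sum_eq_zero_iff_of_nonneg hnn).mp hsum
  intro i
  have := hz i (Finset.mem_univ i)
  have hki : (k i : ℝ) - 2 = 0 := by
    rcases mul_eq_zero.mp this with h | h
    · exact h
    · exact absurd h (hμ i).ne'
  have : (k i : ℝ) = 2 := by linarith
  exact_mod_cast this
end

section
/- Let l ≥ 3 and let k : ZMod l → ℤ satisfy k_i ≥ 2 for every i, with k_{i₀} ≥ 3 for at least one index i₀. Let M be the real symmetric l × l matrix indexed by ZMod l defined by M_{ii} = −k_i, M_{ij} = 1 whenever j = i + 1 or j = i − 1 (mod l), and M_{ij} = 0 otherwise. Then M is negative definite. -/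
/-!
Writing `q(x) = xᵀ(-M)x`, a shift of summation index around the cycle gives
`q(x) = ∑ᵢ (kᵢ - 2) xᵢ² + ∑ᵢ (xᵢ - xᵢ₊₁)²`, a sum of nonnegative terms. If `q(x) = 0`, the second
sum forces `x` to be constant along the cycle, and then the term of the curve with `kᵢ₀ ≥ 3`
forces that constant to vanish.
-/

open Matrix

theorem Fintype.sum_mul_cycle_laplacian_eq {G : Type*} [AddCommGroup G] [Fintype G] (g : G)
    (k x : G → ℝ) :
    ∑ i, x i * (k i * x i - x (i + g) - x (i - g)) =
      ∑ i, ((k i - 2) * x i ^ 2 + (x i - x (i + g)) ^ 2) := by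
  have shift_cross : ∑ i, x i * x (i - g) = ∑ i, x (i + g) * x i := by
    rw [← Equiv.sum_comp (Equiv.addRight g)]
    simp
  have shift_sq : ∑ i, x (i + g) ^ 2 = ∑ i, x i ^ 2 :=
    Equiv.sum_comp (Equiv.addRight g) fun i => x i ^ 2
  have expand : ∀ i, x i * (k i * x i - x (i + g) - x (i - g)) =
      ((k i - 2) * x i ^ 2 + (x i - x (i + g)) ^ 2) +
        (x (i + g) * x i - x i * x (i - g)) - (x (i + g) ^ 2 - x i ^ 2) := fun i => by ring
  simp only [expand, Finset.sum_sub_distrib, Finset.sum_add_distrib, shift_cross, shift_sq]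
  ring

namespace ZMod

variable {l : ℕ}

theorem add_one_ne_sub_one (hl : 3 ≤ l) (i : ZMod l) : i + 1 ≠ i - 1 := by
  intro h
  have two_eq_zero : ((2 : ℕ) : ZMod l) = 0 := by
    push_cast
    linear_combination h
  have := Nat.le_of_dvd two_pos ((natCast_eq_zero_iff 2 l).1 two_eq_zero)
  omega

theorem apply_eq_of_forall_apply_add_one_eq [NeZero l] {α : Type*} {f : ZMod l → α}
    (hf : ∀ i, f (i + 1) = f i) (i j : ZMod l) : f i = f j := by
  have hper : Function.Periodic f 1 := hf
  have (a : ZMod l) : f a = f 0 := by simpa using (hper.nat_mul a.val).eq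
  rw [this i, this j]

end ZMod

section CycleMatrix

variable {l : ℕ}

def cycleIntersectionMatrix (k : ZMod l → ℝ) : Matrix (ZMod l) (ZMod l) ℝ :=
  Matrix.of fun i j => if i = j then -k i else if j = i + 1 ∨ j = i - 1 then 1 else 0

theorem cycleIntersectionMatrix_isSymm (k : ZMod l → ℝ) : (cycleIntersectionMatrix k).IsSymm := by
  ext i j
  simp only [cycleIntersectionMatrix, transpose_apply, of_apply]
  by_cases hij : i = j
  · subst hij
    rfl
  · have : i = j + 1 ∨ i = j - 1 ↔ j = i + 1 ∨ j = i - 1 := by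
      rw [eq_sub_iff_add_eq, eq_sub_iff_add_eq, eq_comm (a := i), eq_comm (a := j)]
      exact or_comm
    simp only [hij, Ne.symm hij, this, if_false]

theorem cycleIntersectionMatrix_apply (hl : 3 ≤ l) (k : ZMod l → ℝ) (i j : ZMod l) :
    cycleIntersectionMatrix k i j =
      (if j = i then -k i else 0) + (if j = i + 1 then 1 else 0) + (if j = i - 1 then 1 else 0) := by
  have : Fact (1 < l) := ⟨by omega⟩
  have h₁ : i ≠ i + 1 := left_ne_add.2 one_ne_zero
  have h₂ : i - 1 ≠ i := sub_eq_self.not.2 one_ne_zero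
  have h₃ := ZMod.add_one_ne_sub_one hl i
  simp only [cycleIntersectionMatrix, of_apply, eq_comm (a := i)]
  by_cases hj : j = i
  · simp [hj, h₁, h₂.symm]
  · by_cases hj₁ : j = i + 1
    · simp [hj₁, h₁.symm, h₃]
    · by_cases hj₂ : j = i - 1 <;> simp [hj, hj₁, hj₂, h₃.symm]

variable [NeZero l]

theorem neg_cycleIntersectionMatrix_mulVec (hl : 3 ≤ l) (k x : ZMod l → ℝ) (i : ZMod l) :
    (-cycleIntersectionMatrix k *ᵥ x) i = k i * x i - x (i + 1) - x (i - 1) := by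
  simp only [mulVec, dotProduct, Matrix.neg_apply, cycleIntersectionMatrix_apply hl, neg_add_rev,
    add_mul, neg_mul, ite_mul, one_mul, zero_mul, Finset.sum_add_distrib, Finset.sum_neg_distrib,
    Finset.sum_ite_eq', Finset.mem_univ, ↓reduceIte]
  ring

theorem dotProduct_neg_cycleIntersectionMatrix_mulVec (hl : 3 ≤ l) (k x : ZMod l → ℝ) :
    x ⬝ᵥ (-cycleIntersectionMatrix k *ᵥ x) =
      ∑ i, ((k i - 2) * x i ^ 2 + (x i - x (i + 1)) ^ 2) := by
  simp only [dotProduct, neg_cycleIntersectionMatrix_mulVec hl]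
  exact Fintype.sum_mul_cycle_laplacian_eq 1 k x

theorem cycle_quadratic_form_pos {k x : ZMod l → ℝ} (hk : ∀ i, 2 ≤ k i) {i₀ : ZMod l}
    (hk₀ : 2 < k i₀) (hx : x ≠ 0) :
    0 < ∑ i, ((k i - 2) * x i ^ 2 + (x i - x (i + 1)) ^ 2) := by
  have term_nonneg (i : ZMod l) : 0 ≤ (k i - 2) * x i ^ 2 + (x i - x (i + 1)) ^ 2 := by
    have := sub_nonneg.2 (hk i)
    positivity
  by_cases hconst : ∀ i, x (i + 1) = x i
  · have hx₀ : x i₀ ≠ 0 := fun h =>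
      hx (funext fun i => (ZMod.apply_eq_of_forall_apply_add_one_eq hconst i i₀).trans h)
    refine Finset.sum_pos' (fun i _ => term_nonneg i) ⟨i₀, Finset.mem_univ _, ?_⟩
    have := sub_pos.2 hk₀
    positivity
  · obtain ⟨i, hi⟩ := not_forall.1 hconst
    refine Finset.sum_pos' (fun i _ => term_nonneg i) ⟨i, Finset.mem_univ _, ?_⟩
    have := sub_nonneg.2 (hk i)
    have := sub_ne_zero.2 (Ne.symm hi)
    positivity

end CycleMatrix

/-- The intersection matrix of a cycle of `l ≥ 3` rational curves with
self-intersections `−k_i ≤ −2`, at least one of which is `≤ −3`, is negative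
definite (i.e. `−M` is positive definite). -/
theorem cycle_intersection_matrix_negative_definite (l : ℕ) (hl : 3 ≤ l) [NeZero l]
    (k : ZMod l → ℤ) (hk : ∀ i, 2 ≤ k i) (i₀ : ZMod l) (hk₀ : 3 ≤ k i₀)
    (M : Matrix (ZMod l) (ZMod l) ℝ)
    (hM : ∀ i j, M i j =
      if i = j then -(k i : ℝ) else if j = i + 1 ∨ j = i - 1 then 1 else 0) :
    (-M).PosDef := by
  obtain rfl : M = cycleIntersectionMatrix (fun i => (k i : ℝ)) := Matrix.ext hM
  refine posDef_iff_dotProduct_mulVec.2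
    ⟨(isHermitian_iff_isSymm.2 (cycleIntersectionMatrix_isSymm _)).neg, fun x hx => ?_⟩
  rw [star_trivial, dotProduct_neg_cycleIntersectionMatrix_mulVec hl]
  exact cycle_quadratic_form_pos (fun i => by exact_mod_cast hk i)
    (by exact_mod_cast hk₀ : (2 : ℝ) < k i₀) hx
end

section
/- Let l ≥ 2 and let k_1, …, k_l and λ_1, …, λ_l be elements of a commutative ring satisfying the chain relations. Then Σ_{i=1}^{l} (k_i − 2)·λ_i + λ_1 + λ_l = 0. -/
lemma chain_partial_sum {R : Type*} [CommRing R] (l : ℕ)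
    (k lam : ℕ → R)
    (hfirst : k 1 * lam 1 = lam 2)
    (hmid : ∀ i, 1 < i → i < l → k i * lam i = lam (i - 1) + lam (i + 1)) :
    ∀ j, 1 ≤ j → j < l →
      (∑ i ∈ Finset.Icc 1 j, k i * lam i)
        = 2 * (∑ i ∈ Finset.Icc 1 j, lam i) - lam 1 - lam j + lam (j + 1) := by
  intro j
  induction j with
  | zero => omega
  | succ n ih =>
    intro _ hlt
    rcases Nat.eq_or_lt_of_le (Nat.one_le_iff_ne_zero.mpr (by omega) : 1 ≤ n + 1) with h1 | h1
    · simp [← h1, hfirst]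
      ring
    · have hn1 : 1 ≤ n := by omega
      have hIH := ih hn1 (by omega)
      rw [Finset.sum_Icc_succ_top (by omega : 1 ≤ n + 1),
          Finset.sum_Icc_succ_top (by omega : 1 ≤ n + 1), hIH,
          hmid (n + 1) (by omega) hlt]
      simp only [Nat.add_sub_cancel]
      ring

/-- If `l ≥ 2` and `k_1, …, k_l`, `λ_1, …, λ_l` are elements of a commutative ring
satisfying the chain relations `k_1·λ_1 = λ_2`, `k_i·λ_i = λ_{i−1} + λ_{i+1}` for
`1 < i < l`, and `k_l·λ_l = λ_{l−1}`, then `Σ_{i=1}^{l} (k_i − 2)·λ_i + λ_1 + λ_l = 0`. -/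
theorem chain_relations_sum {R : Type*} [CommRing R] (l : ℕ) (hl : 2 ≤ l)
    (k lam : ℕ → R)
    (hfirst : k 1 * lam 1 = lam 2)
    (hmid : ∀ i, 1 < i → i < l → k i * lam i = lam (i - 1) + lam (i + 1))
    (hlast : k l * lam l = lam (l - 1)) :
    (∑ i ∈ Finset.Icc 1 l, (k i - 2) * lam i) + lam 1 + lam l = 0 := by
  obtain ⟨m, rfl⟩ : ∃ m, l = m + 1 := ⟨l - 1, by omega⟩
  have hm : 1 ≤ m := by omega
  have hps := chain_partial_sum (m + 1) k lam hfirst hmid m hm (by omega)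
  have hsplit : ∀ f : ℕ → R,
      (∑ i ∈ Finset.Icc 1 (m + 1), f i) = (∑ i ∈ Finset.Icc 1 m, f i) + f (m + 1) :=
    fun f => Finset.sum_Icc_succ_top (by omega : 1 ≤ m + 1) f
  simp only [Nat.add_sub_cancel] at hlast
  simp only [sub_mul]
  rw [Finset.sum_sub_distrib, hsplit, hsplit, hps, hlast, ← Finset.mul_sum]
  ring
end

section
/- There do not exist an integer l ≥ 2, integers k_1, …, k_l with k_i ≥ 2 for every i, and positive real numbers λ_1, …, λ_l satisfying the chain relations. -/
/-- There is no `l ≥ 2`, integers `k_1, …, k_l` with `k_i ≥ 2`, and positive real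
numbers `λ_1, …, λ_l` satisfying the chain relations `k_1·λ_1 = λ_2`,
`k_i·λ_i = λ_{i−1} + λ_{i+1}` for `1 < i < l`, and `k_l·λ_l = λ_{l−1}`. -/
theorem no_positive_chain : ¬ ∃ (l : ℕ) (k : ℕ → ℤ) (lam : ℕ → ℝ),
    2 ≤ l ∧
    (∀ i, 1 ≤ i → i ≤ l → 2 ≤ k i) ∧
    (∀ i, 1 ≤ i → i ≤ l → 0 < lam i) ∧
    (k 1 : ℝ) * lam 1 = lam 2 ∧
    (∀ i, 1 < i → i < l → (k i : ℝ) * lam i = lam (i - 1) + lam (i + 1)) ∧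
    (k l : ℝ) * lam l = lam (l - 1) := by
  rintro ⟨l, k, lam, hl, hk, hpos, h1, hmid, hend⟩
  have hkR : ∀ i, 1 ≤ i → i ≤ l → (2 : ℝ) ≤ (k i : ℝ) := by
    intro i hi hil
    exact_mod_cast hk i hi hil
  have key : ∀ i, 1 ≤ i → i < l → lam i < lam (i + 1) := by
    intro i hi
    induction i, hi using Nat.le_induction with
    | base =>
      intro hl1
      have h2 := hkR 1 le_rfl (by omega)
      have hp := hpos 1 le_rfl (by omega)
      nlinarith [h1]
    | succ n hn ih =>
      intro hnl
      have hrel := hmid (n + 1) (by omega) hnl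
      simp only [Nat.add_sub_cancel] at hrel
      have hlt : lam n < lam (n + 1) := ih (by omega)
      have h2 := hkR (n + 1) (by omega) (by omega)
      have hp := hpos (n + 1) (by omega) (by omega)
      nlinarith
  have h1l : lam (l - 1) < lam l := by
    have := key (l - 1) (by omega) (by omega)
    rwa [Nat.sub_add_cancel (by omega)] at this
  have h2 := hkR l (by omega) le_rfl
  have hp := hpos l (by omega) le_rfl
  nlinarith
end

section
/- Let l ≥ 2, let k_1, …, k_l be integers with k_i ≥ 1 for every i, and let λ_1, …, λ_l be nonzero complex numbers with λ_1 = 1 satisfying the chain relations, and such that for every i with 1 ≤ i < l there is no positive rational number q with −λ_i/λ_{i+1} = q. Then λ_i is a positive integer for every i, and k_i = 1 for some i. -/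
/-- Integer chain sequence: `chainM k 1 = 1`, `chainM k 2 = k 1`,
`chainM k (i+2) = k (i+1) * chainM k (i+1) - chainM k i`. -/
def chainM (k : ℕ → ℤ) : ℕ → ℤ
  | 0 => 0
  | 1 => 1
  | (i + 2) => k (i + 1) * chainM k (i + 1) - chainM k i

/-- If `l ≥ 2`, `k_i ≥ 1` are integers, and `λ_1, …, λ_l` are nonzero complex numbers
with `λ_1 = 1` satisfying the chain relations, such that `−λ_i/λ_{i+1}` is never a
positive rational, then every `λ_i` is a positive integer and some `k_i` equals `1`. -/
theorem chain_relations_integrality (l : ℕ) (hl : 2 ≤ l)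
    (k : ℕ → ℤ) (hk : ∀ i, 1 ≤ i → i ≤ l → 1 ≤ k i)
    (lam : ℕ → ℂ) (hne : ∀ i, 1 ≤ i → i ≤ l → lam i ≠ 0)
    (hone : lam 1 = 1)
    (hfirst : (k 1 : ℂ) * lam 1 = lam 2)
    (hmid : ∀ i, 1 < i → i < l → (k i : ℂ) * lam i = lam (i - 1) + lam (i + 1))
    (hlast : (k l : ℂ) * lam l = lam (l - 1))
    (hq : ∀ i, 1 ≤ i → i < l → ¬ ∃ q : ℚ, 0 < q ∧ -lam i / lam (i + 1) = (q : ℂ)) :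
    (∀ i, 1 ≤ i → i ≤ l → ∃ n : ℤ, 0 < n ∧ lam i = (n : ℂ)) ∧
    ∃ i, 1 ≤ i ∧ i ≤ l ∧ k i = 1 := by
  set m := chainM k with hm
  -- lam agrees with the integer sequence
  have hlam : ∀ i, 1 ≤ i → i ≤ l → lam i = (m i : ℂ) := by
    intro i
    induction i using Nat.strong_induction_on with
    | _ i ih =>
      match i with
      | 0 => intro h; omega
      | 1 => intro _ _; simp [hm, chainM, hone]
      | 2 =>
        intro _ _
        have : lam 2 = (k 1 : ℂ) := by rw [← hfirst, hone, mul_one]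
        simp [hm, chainM, this]
      | (i + 3) =>
        intro _ h3
        have h1 : lam (i + 1) = (m (i + 1) : ℂ) := ih (i + 1) (by omega) (by omega) (by omega)
        have h2 : lam (i + 2) = (m (i + 2) : ℂ) := ih (i + 2) (by omega) (by omega) (by omega)
        have hmd := hmid (i + 2) (by omega) (by omega)
        simp only [show i + 2 - 1 = i + 1 from rfl, show i + 2 + 1 = i + 3 from rfl] at hmd
        have : lam (i + 3) = (k (i + 2) : ℂ) * lam (i + 2) - lam (i + 1) := by
          rw [hmd]; ring
        rw [this, h1, h2]
        show _ = ((k (i + 2) * m (i + 2) - m (i + 1) : ℤ) : ℂ)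
        push_cast
        ring
  -- positivity
  have hpos : ∀ i, 1 ≤ i → i ≤ l → 0 < m i := by
    intro i
    induction i using Nat.strong_induction_on with
    | _ i ih =>
      match i with
      | 0 => intro h; omega
      | 1 => intro _ _; simp [hm, chainM]
      | 2 =>
        intro _ _
        have := hk 1 le_rfl (by omega)
        simp only [hm]
        show (0:ℤ) < k 1 * 1 - 0
        omega
      | (i + 3) =>
        intro _ h3
        have hp2 : 0 < m (i + 2) := ih (i + 2) (by omega) (by omega) (by omega)
        have hnz : m (i + 3) ≠ 0 := by
          intro h0
          apply hne (i + 3) (by omega) h3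
          rw [hlam (i + 3) (by omega) h3, h0]; simp
        by_contra hle
        push_neg at hle
        have hneg : m (i + 3) < 0 := lt_of_le_of_ne hle hnz
        apply hq (i + 2) (by omega) (by omega)
        refine ⟨(m (i + 2) : ℚ) / (-(m (i + 3)) : ℚ), ?_, ?_⟩
        · apply div_pos <;> [exact_mod_cast hp2; exact_mod_cast Int.neg_pos.mpr hneg]
        · rw [hlam (i + 2) (by omega) (by omega),
            show i + 2 + 1 = i + 3 from rfl, hlam (i + 3) (by omega) h3]
          push_cast
          rw [div_neg, neg_div]
  constructor
  · intro i h1 h2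
    exact ⟨m i, hpos i h1 h2, hlam i h1 h2⟩
  · by_contra hcon
    push_neg at hcon
    have hk2 : ∀ i, 1 ≤ i → i ≤ l → 2 ≤ k i := by
      intro i h1 h2
      have := hk i h1 h2
      have := hcon i h1 h2
      omega
    -- strictly increasing
    have hinc : ∀ i, 1 ≤ i → i + 1 ≤ l → m i < m (i + 1) := by
      intro i
      induction i using Nat.strong_induction_on with
      | _ i ih =>
        match i with
        | 0 => intro h; omega
        | 1 =>
          intro _ h2
          have := hk2 1 le_rfl (by omega)
          simp only [hm]
          show chainM k 1 < chainM k 2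
          show (1:ℤ) < k 1 * 1 - 0
          omega
        | (i + 2) =>
          intro _ h2
          have hprev : m (i + 1) < m (i + 2) := ih (i + 1) (by omega) (by omega) (by omega)
          have hp : 0 < m (i + 2) := hpos (i + 2) (by omega) (by omega)
          have hk' := hk2 (i + 2) (by omega) (by omega)
          have h3 : m (i + 3) = k (i + 2) * m (i + 2) - m (i + 1) := rfl
          have hmul : 2 * m (i + 2) ≤ k (i + 2) * m (i + 2) :=
            mul_le_mul_of_nonneg_right hk' hp.le
          show m (i + 2) < m (i + 3)
          omega
    -- contradiction with hlast
    have hl1 : 1 ≤ l - 1 := by omega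
    have hlm : m (l - 1) < m l := by
      have := hinc (l - 1) hl1 (by omega)
      rwa [show l - 1 + 1 = l by omega] at this
    have hcast : k l * m l = m (l - 1) := by
      have := hlast
      rw [hlam l (by omega) le_rfl, hlam (l - 1) (by omega) (by omega)] at this
      exact_mod_cast this
    have hkl := hk l (by omega) le_rfl
    have hpl : 0 < m l := hpos l (by omega) le_rfl
    have hmul : 1 * m l ≤ k l * m l := mul_le_mul_of_nonneg_right hkl hpl.le
    omega
end

section
/- Let n ≥ 1, let m_0, m_1, …, m_{n+1} be positive integers with m_{n+1} = 1, and let k_1, …, k_{n+1} be integers with k_i ≥ 2 for every i, satisfying m_i·k_i = m_{i−1} + m_{i+1} for every i with 1 ≤ i ≤ n, and m_{n+1}·k_{n+1} = m_n. Then m_0 > m_1; in particular m_0 ≥ 2. -/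
/-- Camacho–Sad relations along a chain of rational orbifolds rooted at an invariant
curve: if `n ≥ 1`, `m_0, …, m_{n+1}` are positive integers with `m_{n+1} = 1`,
`k_1, …, k_{n+1}` are integers `≥ 2`, `m_i·k_i = m_{i−1} + m_{i+1}` for `1 ≤ i ≤ n`,
and `m_{n+1}·k_{n+1} = m_n`, then `m_0 > m_1`; in particular `m_0 ≥ 2`. -/
theorem rooted_chain_root_index (n : ℕ) (hn : 1 ≤ n)
    (m : ℕ → ℤ) (hm : ∀ i, i ≤ n + 1 → 0 < m i) (hmlast : m (n + 1) = 1)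
    (k : ℕ → ℤ) (hk : ∀ i, 1 ≤ i → i ≤ n + 1 → 2 ≤ k i)
    (hrel : ∀ i, 1 ≤ i → i ≤ n → m i * k i = m (i - 1) + m (i + 1))
    (hrellast : m (n + 1) * k (n + 1) = m n) :
    m 1 < m 0 ∧ 2 ≤ m 0 := by
  have hlast : m (n + 1) < m n := by
    have hk' : 2 ≤ k (n + 1) := hk (n + 1) (by omega) le_rfl
    rw [hmlast, one_mul] at hrellast
    omega
  have key : ∀ d, d ≤ n → ∀ i, i = n - d → m (i + 1) < m i := by
    intro d
    induction d with
    | zero =>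
      intro _ i hi
      have hin : i = n := by omega
      rw [hin]; exact hlast
    | succ d ih =>
      intro hd i hi
      have h1 : i + 1 ≤ n := by omega
      have ih' : m (i + 2) < m (i + 1) := ih (by omega) (i + 1) (by omega)
      have hrel' := hrel (i + 1) (by omega) h1
      simp only [Nat.add_sub_cancel] at hrel'
      have hk' : 2 ≤ k (i + 1) := hk (i + 1) (by omega) (by omega)
      have hmpos : 0 < m (i + 1) := hm (i + 1) (by omega)
      nlinarith [hrel', hk', hmpos, ih']
  have h10 : m 1 < m 0 := key n le_rfl 0 (by omega)
  have h1pos : 0 < m 1 := hm 1 (by omega)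
  exact ⟨h10, by omega⟩
end

section
/- Let n ≥ 1, let ℓ : {1, …, n} → {1, …, n} satisfy ℓ(j) < j for every j ≥ 2, and let r : {2, …, n} → ℚ satisfy r_j < 0 for every j. Define the symmetric n × n rational matrix M by: for i ≠ j, M_{ij} = 1 if ℓ(i) = j or ℓ(j) = i, and M_{ij} = 0 otherwise; and M_{jj} = (1/r_j if j ≥ 2, and 0 if j = 1) + Σ_{k : k ≥ 2, ℓ(k) = j} r_k. Define a_1 = 1 and, recursively, a_j = −r_j · a_{ℓ(j)} for j ≥ 2. Then a_j > 0 for every j and M·a = 0 (so in particular aᵀ·M·a = 0). -/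
/-- The intersection matrix of a tree of invariant curves admits a positive kernel
vector. Here indices run over `{1, …, n}`, `ℓ j` is the parent of the vertex `j ≥ 2`
(with `1 ≤ ℓ j < j`), and `r j < 0` is the Camacho–Sad contribution at the
intersection of `C_j` with its parent. The matrix `M` has off-diagonal entries `1`
exactly along parent-child pairs and diagonal entries
`M_jj = (1/r_j if j ≥ 2 else 0) + Σ_{k ≥ 2, ℓ(k) = j} r_k`. The vector `a`, defined
by `a_1 = 1` and `a_j = −r_j·a_{ℓ(j)}` for `j ≥ 2`, is positive and satisfies
`M·a = 0`; in particular `aᵀ·M·a = 0`. -/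
theorem tree_intersection_matrix_kernel (n : ℕ) (hn : 1 ≤ n)
    (ℓ : ℕ → ℕ) (hℓ : ∀ j, 2 ≤ j → j ≤ n → 1 ≤ ℓ j ∧ ℓ j < j)
    (r : ℕ → ℚ) (hr : ∀ j, 2 ≤ j → j ≤ n → r j < 0)
    (M : ℕ → ℕ → ℚ)
    (hMoff : ∀ i j, 1 ≤ i → i ≤ n → 1 ≤ j → j ≤ n → i ≠ j →
      M i j = if (2 ≤ i ∧ ℓ i = j) ∨ (2 ≤ j ∧ ℓ j = i) then 1 else 0)
    (hMdiag : ∀ j, 1 ≤ j → j ≤ n →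
      M j j = (if 2 ≤ j then 1 / r j else 0) +
        ∑ k ∈ Finset.Icc 2 n, (if ℓ k = j then r k else 0))
    (a : ℕ → ℚ) (ha1 : a 1 = 1)
    (haj : ∀ j, 2 ≤ j → j ≤ n → a j = -r j * a (ℓ j)) :
    (∀ j, 1 ≤ j → j ≤ n → 0 < a j) ∧
    (∀ j, 1 ≤ j → j ≤ n → ∑ i ∈ Finset.Icc 1 n, M j i * a i = 0) ∧
    (∑ j ∈ Finset.Icc 1 n, ∑ i ∈ Finset.Icc 1 n, a j * M j i * a i = 0) := by
  -- positivity
  have hapos : ∀ j, 1 ≤ j → j ≤ n → 0 < a j := by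
    intro j
    induction j using Nat.strong_induction_on with
    | _ j ih =>
      intro h1 h2
      by_cases hj2 : 2 ≤ j
      · obtain ⟨hl1, hl2⟩ := hℓ j hj2 h2
        have hpar : 0 < a (ℓ j) := ih (ℓ j) hl2 hl1 (le_trans hl2.le h2)
        have hrj := hr j hj2 h2
        rw [haj j hj2 h2]
        nlinarith
      · have : j = 1 := by omega
        rw [this, ha1]; norm_num
  -- kernel
  have hker : ∀ j, 1 ≤ j → j ≤ n → ∑ i ∈ Finset.Icc 1 n, M j i * a i = 0 := by
    intro j hj1 hjn
    have hjmem : j ∈ Finset.Icc 1 n := Finset.mem_Icc.mpr ⟨hj1, hjn⟩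
    rw [← Finset.add_sum_erase _ _ hjmem]
    set g : ℕ → ℚ := fun i =>
      (if 2 ≤ j ∧ ℓ j = i then a i else 0) + (if 2 ≤ i ∧ ℓ i = j then a i else 0) with hg
    have hA : ∑ i ∈ (Finset.Icc 1 n).erase j, M j i * a i
        = ∑ i ∈ (Finset.Icc 1 n).erase j, g i := by
      apply Finset.sum_congr rfl
      intro i hi
      have hine : i ≠ j := Finset.ne_of_mem_erase hi
      have hi' := Finset.mem_Icc.mp (Finset.mem_of_mem_erase hi)
      rw [hMoff j i hj1 hjn hi'.1 hi'.2 (Ne.symm hine), hg]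
      by_cases hP : 2 ≤ j ∧ ℓ j = i
      · by_cases hQ : 2 ≤ i ∧ ℓ i = j
        · exfalso
          have h1 := (hℓ j hP.1 hjn).2
          have h2 := (hℓ i hQ.1 hi'.2).2
          omega
        · simp [hP, hQ]
      · by_cases hQ : 2 ≤ i ∧ ℓ i = j
        · simp [hP, hQ]
        · simp [hP, hQ]
    have hgj : g j = 0 := by
      rw [hg]
      by_cases hj2 : 2 ≤ j
      · have : ℓ j ≠ j := (hℓ j hj2 hjn).2.ne
        simp [this]
      · simp [hj2]
    have hB : ∑ i ∈ (Finset.Icc 1 n).erase j, g i = ∑ i ∈ Finset.Icc 1 n, g i :=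
      Finset.sum_erase _ hgj
    -- parent part
    have hP : ∑ i ∈ Finset.Icc 1 n, (if 2 ≤ j ∧ ℓ j = i then a i else 0)
        = (if 2 ≤ j then a (ℓ j) else 0) := by
      by_cases hj2 : 2 ≤ j
      · simp only [hj2, true_and, if_true]
        rw [Finset.sum_ite_eq]
        have : ℓ j ∈ Finset.Icc 1 n := by
          obtain ⟨h1, h2⟩ := hℓ j hj2 hjn
          exact Finset.mem_Icc.mpr ⟨h1, by omega⟩
        simp [this]
      · simp [hj2]
    -- children part
    have hC : ∑ i ∈ Finset.Icc 1 n, (if 2 ≤ i ∧ ℓ i = j then a i else 0)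
        = ∑ k ∈ Finset.Icc 2 n, (if ℓ k = j then a k else 0) := by
      rw [← Finset.sum_subset (Finset.Icc_subset_Icc_left (by norm_num : (1:ℕ) ≤ 2))
        (by intro x hx hx2
            have h1 := Finset.mem_Icc.mp hx
            have : ¬ 2 ≤ x := by
              intro h
              exact hx2 (Finset.mem_Icc.mpr ⟨h, h1.2⟩)
            simp [this])]
      apply Finset.sum_congr rfl
      intro k hk
      have hk' := Finset.mem_Icc.mp hk
      simp [hk'.1]
    have hsplit : ∑ i ∈ Finset.Icc 1 n, g i
        = (if 2 ≤ j then a (ℓ j) else 0)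
          + ∑ k ∈ Finset.Icc 2 n, (if ℓ k = j then a k else 0) := by
      rw [hg, Finset.sum_add_distrib, hP, hC]
    -- diagonal part
    have hD : M j j * a j
        = (if 2 ≤ j then a j / r j else 0)
          + ∑ k ∈ Finset.Icc 2 n, (if ℓ k = j then r k * a j else 0) := by
      rw [hMdiag j hj1 hjn, add_mul, Finset.sum_mul]
      congr 1
      · by_cases hj2 : 2 ≤ j <;> simp [hj2] <;> ring
      · apply Finset.sum_congr rfl
        intro k _
        by_cases h : ℓ k = j <;> simp [h]
    rw [hA, hB, hsplit, hD]
    have hpair : (if 2 ≤ j then a j / r j else 0) + (if 2 ≤ j then a (ℓ j) else 0) = 0 := by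
      by_cases hj2 : 2 ≤ j
      · simp only [hj2, if_true]
        have hrj : r j ≠ 0 := (hr j hj2 hjn).ne
        rw [haj j hj2 hjn]
        field_simp
        ring
      · simp [hj2]
    have hsums : ∑ k ∈ Finset.Icc 2 n, (if ℓ k = j then r k * a j else 0)
        + ∑ k ∈ Finset.Icc 2 n, (if ℓ k = j then a k else 0) = 0 := by
      rw [← Finset.sum_add_distrib]
      apply Finset.sum_eq_zero
      intro k hk
      have hk' := Finset.mem_Icc.mp hk
      by_cases h : ℓ k = j
      · simp only [h, if_true]
        rw [haj k hk'.1 hk'.2, h]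
        ring
      · simp [h]
    linarith
  refine ⟨hapos, hker, ?_⟩
  apply Finset.sum_eq_zero
  intro j hj
  have hj' := Finset.mem_Icc.mp hj
  calc ∑ i ∈ Finset.Icc 1 n, a j * M j i * a i
      = a j * ∑ i ∈ Finset.Icc 1 n, M j i * a i := by
        rw [Finset.mul_sum]; apply Finset.sum_congr rfl; intro i _; ring
    _ = 0 := by rw [hker j hj'.1 hj'.2, mul_zero]
end
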